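/- arXiv:math/0605486 — 4 statements merged into one kernel-verified Lean document; each statement's English description precedes it below -/
import Mathlib

section
/- For every finite interval graph G on n vertices there exists a bijection f : V(G) → {1,…,n} such that for all vertices u, v, w with f(u) < f(w) < f(v), if u is adjacent to v then u is adjacent to w. -/
/-- A graph is an interval graph: vertices map to closed intervals with
adjacency (for distinct vertices) iff the intervals intersect. -/
def IsIntervalGraph {V : Type*} (G : SimpleGraph V) : Prop :=
  ∃ l r : V → ℝ, ∀ u v : V, u ≠ v →
    (G.Adj u v ↔ (Set.Icc (l u) (r u) ∩ Set.Icc (l v) (r v)).Nonempty)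

/-!
Order the vertices by the left endpoints of their intervals, putting the vertices with empty
intervals (which are isolated) last. If `u` comes before `w`, `w` before `v`, and the interval of
`u` meets that of `v`, then `l u ≤ l w ≤ l v ≤ r u`, so `l w` lies in the intervals of both `u`
and `w`.
-/

open Set

theorem Fintype.exists_equiv_fin_monotone {V α : Type*} [Fintype V] [LinearOrder α]
    (key : V → α) :
    ∃ f : V ≃ Fin (Fintype.card V), ∀ u w, f u < f w → key u ≤ key w := by
  let e := Fintype.equivFin V
  let σ := Tuple.sort (key ∘ e.symm)
  refine ⟨e.trans σ.symm, fun u w huw => ?_⟩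
  simpa [σ] using Tuple.monotone_sort (key ∘ e.symm) huw.le

section LeftEndpoint

variable {α : Type*} [LinearOrder α]

def leftEndpoint (a b : α) : WithTop α :=
  if a ≤ b then a else ⊤

theorem leftEndpoint_of_le {a b : α} (h : a ≤ b) : leftEndpoint a b = a :=
  if_pos h

theorem le_of_leftEndpoint_le_coe {a b c : α} (h : leftEndpoint a b ≤ c) : a ≤ b := by
  by_contra hab
  simp [leftEndpoint, hab] at h

theorem Icc_inter_Icc_nonempty_of_leftEndpoint_le {a₁ b₁ a₂ b₂ a₃ b₃ : α}
    (h₁₂ : leftEndpoint a₁ b₁ ≤ leftEndpoint a₂ b₂)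
    (h₂₃ : leftEndpoint a₂ b₂ ≤ leftEndpoint a₃ b₃)
    (h₁₃ : (Icc a₁ b₁ ∩ Icc a₃ b₃).Nonempty) :
    (Icc a₁ b₁ ∩ Icc a₂ b₂).Nonempty := by
  obtain ⟨x, ⟨ha₁x, hxb₁⟩, ha₃x, hxb₃⟩ := h₁₃
  rw [leftEndpoint_of_le (ha₃x.trans hxb₃)] at h₂₃
  have ha₂b₂ : a₂ ≤ b₂ := le_of_leftEndpoint_le_coe h₂₃
  rw [leftEndpoint_of_le ha₂b₂, WithTop.coe_le_coe] at h₂₃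
  rw [leftEndpoint_of_le (ha₁x.trans hxb₁), leftEndpoint_of_le ha₂b₂, WithTop.coe_le_coe] at h₁₂
  exact ⟨a₂, ⟨h₁₂, h₂₃.trans (ha₃x.trans hxb₁)⟩, le_rfl, ha₂b₂⟩

end LeftEndpoint

/-- every finite interval graph on n vertices admits a bijective
ordering f : V ≃ {1,…,n} such that f(u) < f(w) < f(v) and Adj u v imply Adj u w. -/
theorem stmt1 {V : Type*} [Fintype V] (G : SimpleGraph V)
    (hG : IsIntervalGraph G) :
    ∃ f : V ≃ Fin (Fintype.card V),
      ∀ u v w : V, (f u : ℕ) < (f w : ℕ) → (f w : ℕ) < (f v : ℕ) →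
        G.Adj u v → G.Adj u w := by
  obtain ⟨l, r, hlr⟩ := hG
  obtain ⟨f, hf⟩ := Fintype.exists_equiv_fin_monotone fun v => leftEndpoint (l v) (r v)
  refine ⟨f, fun u v w huw hwv huv => ?_⟩
  have hne : ∀ {a b : V}, (f a : ℕ) < f b → a ≠ b := fun h hab => by simp [hab] at h
  exact (hlr u w (hne huw)).2 <| Icc_inter_Icc_nonempty_of_leftEndpoint_le (hf u w huw)
    (hf w v hwv) ((hlr u v (hne (huw.trans hwv))).1 huv)
end

section
/- Let r(n) be the largest real number such that some non-complete graph G on n vertices satisfies cub(G) = r(n)·box(G). Then there exists an interval graph G' on n vertices with cub(G') = r(n). -/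
/-- A graph is an indifference (unit interval) graph. -/
def IsIndifferenceGraph {V : Type*} (G : SimpleGraph V) : Prop :=
  ∃ l : V → ℝ, ∀ u v : V, u ≠ v →
    (G.Adj u v ↔ (Set.Icc (l u) (l u + 1) ∩ Set.Icc (l v) (l v + 1)).Nonempty)

/-- Boxicity: the least b such that E(G) is the intersection of the edge sets of
b interval graphs on V(G).  (For a complete graph, b = 0 works.) -/
noncomputable def boxicity {V : Type*} (G : SimpleGraph V) : ℕ :=
  sInf {b : ℕ | ∃ I : Fin b → SimpleGraph V,
    (∀ i, IsIntervalGraph (I i)) ∧ ∀ u v : V, G.Adj u v ↔ ∀ i, (I i).Adj u v}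

/-- Cubicity: the least b such that E(G) is the intersection of the edge sets of
b indifference graphs on V(G).  (For a complete graph, b = 0 works.) -/
noncomputable def cubicity {V : Type*} (G : SimpleGraph V) : ℕ :=
  sInf {b : ℕ | ∃ I : Fin b → SimpleGraph V,
    (∀ i, IsIndifferenceGraph (I i)) ∧ ∀ u v : V, G.Adj u v ↔ ∀ i, (I i).Adj u v}

/-!
Since every indifference graph is an interval graph, `box G ≤ cub G`, so `r ≥ 1`; together with
the maximality of `r`, every interval graph `H` has `cub H ≤ r` (a complete `H` has `cub H = 1`,
otherwise `box H = 1`). Conversely, take a graph `G` attaining `r` and an optimal box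
representation `G = I₁ ∩ ⋯ ∩ I_b`. Intersecting cube representations of the `Iᵢ`, padded to a
common length `C = maxᵢ cub Iᵢ`, gives `cub G ≤ b C`, so `r ≤ C`. Hence the `Iᵢ` of largest
cubicity is an interval graph of cubicity exactly `r`.
-/

open SimpleGraph

lemma Icc_add_one_inter_nonempty_iff (a b : ℝ) :
    (Set.Icc a (a + 1) ∩ Set.Icc b (b + 1)).Nonempty ↔ |a - b| ≤ 1 := by
  rw [abs_le]
  constructor
  · rintro ⟨x, ⟨hax, hxa⟩, hbx, hxb⟩
    constructor <;> linarith
  · rintro ⟨hba, hab⟩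
    exact ⟨max a b, ⟨le_max_left _ _, max_le (by linarith) (by linarith)⟩,
      ⟨le_max_right _ _, max_le (by linarith) (by linarith)⟩⟩

section Graphs

variable {V : Type*}

lemma isIndifferenceGraph_iff (G : SimpleGraph V) :
    IsIndifferenceGraph G ↔ ∃ l : V → ℝ, ∀ u v : V, u ≠ v → (G.Adj u v ↔ |l u - l v| ≤ 1) := by
  simp only [IsIndifferenceGraph, Icc_add_one_inter_nonempty_iff]

lemma IsIndifferenceGraph.isIntervalGraph {G : SimpleGraph V} (h : IsIndifferenceGraph G) :
    IsIntervalGraph G := by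
  obtain ⟨l, hl⟩ := h
  exact ⟨l, fun v => l v + 1, hl⟩

lemma isIndifferenceGraph_top : IsIndifferenceGraph (⊤ : SimpleGraph V) :=
  (isIndifferenceGraph_iff _).2 ⟨fun _ => 0, fun u v huv => by simpa using huv⟩

/-- Place `x` at `0`, `y` at `2` and every other vertex at `1`. -/
lemma isIndifferenceGraph_top_sdiff_edge [DecidableEq V] (x y : V) :
    IsIndifferenceGraph ((⊤ : SimpleGraph V) \ edge x y) := by
  refine (isIndifferenceGraph_iff _).2
    ⟨fun u => if u = x then 0 else if u = y then 2 else 1, fun u v huv => ?_⟩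
  simp only [sdiff_adj, top_adj, edge_adj, ne_eq, huv, not_false_eq_true, and_true, true_and]
  by_cases hux : u = x <;> by_cases huy : u = y <;> by_cases hvx : v = x <;>
    by_cases hvy : v = y <;> simp_all <;> norm_num

def intersectionDims (P : SimpleGraph V → Prop) (G : SimpleGraph V) : Set ℕ :=
  {b | ∃ I : Fin b → SimpleGraph V, (∀ i, P (I i)) ∧ ∀ u v, G.Adj u v ↔ ∀ i, (I i).Adj u v}

variable {P Q : SimpleGraph V → Prop} {G : SimpleGraph V}

lemma natCard_mem_intersectionDims {ι : Type*} [Finite ι] (I : ι → SimpleGraph V)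
    (hI : ∀ i, P (I i)) (hG : ∀ u v, G.Adj u v ↔ ∀ i, (I i).Adj u v) :
    Nat.card ι ∈ intersectionDims P G :=
  let e := Finite.equivFin ι
  ⟨I ∘ e.symm, fun _ => hI _, fun u v => (hG u v).trans e.forall_congr_left⟩

lemma one_mem_intersectionDims (h : P G) : 1 ∈ intersectionDims P G :=
  ⟨fun _ => G, fun _ => h, fun _ _ => ⟨fun h _ => h, fun h => h 0⟩⟩

lemma zero_notMem_intersectionDims [Nonempty V] : 0 ∉ intersectionDims P G := by
  rintro ⟨I, -, hG⟩
  obtain ⟨u⟩ := ‹Nonempty V›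
  exact G.irrefl ((hG u u).2 finZeroElim)

lemma intersectionDims_mono (hPQ : ∀ H, P H → Q H) :
    intersectionDims P G ⊆ intersectionDims Q G := fun _ ⟨I, hI, hG⟩ =>
  ⟨I, fun i => hPQ _ (hI i), hG⟩

/-- Representations can be padded with copies of the complete graph. -/
lemma mem_intersectionDims_of_le (hTop : P ⊤) {k m : ℕ} (hk : k ∈ intersectionDims P G)
    (hkm : k ≤ m) : m ∈ intersectionDims P G := by
  obtain ⟨I, hI, hG⟩ := hk
  have hcard : Nat.card (Fin k ⊕ Fin (m - k)) = m := by simp; omega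
  refine hcard ▸ natCard_mem_intersectionDims (Sum.elim I fun _ => ⊤)
    (Sum.forall.2 ⟨hI, fun _ => hTop⟩) fun u v => ?_
  rw [Sum.forall, hG]
  exact ⟨fun h => ⟨h, fun _ => ((hG u v).2 h).ne⟩, And.left⟩

lemma mul_mem_intersectionDims {b C : ℕ} (I : Fin b → SimpleGraph V)
    (hG : ∀ u v, G.Adj u v ↔ ∀ i, (I i).Adj u v) (hC : ∀ i, C ∈ intersectionDims Q (I i)) :
    b * C ∈ intersectionDims Q G := by
  choose J hJ hIJ using hC
  have hcard : Nat.card (Fin b × Fin C) = b * C := by simp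
  exact hcard ▸ natCard_mem_intersectionDims (fun p => J p.1 p.2) (fun p => hJ p.1 p.2)
    fun u v => by simp only [hG, hIJ, Prod.forall]

/-- `G` is the intersection of the complete graph minus `e`, over all non-edges `e` of `G`. -/
lemma intersectionDims_isIndifferenceGraph_nonempty [Finite V] (G : SimpleGraph V) :
    (intersectionDims IsIndifferenceGraph G).Nonempty := by
  classical
  refine ⟨_, natCard_mem_intersectionDims (ι := {p : V × V // ¬ G.Adj p.1 p.2})
    (fun p => (⊤ : SimpleGraph V) \ edge p.1.1 p.1.2)
    (fun p => isIndifferenceGraph_top_sdiff_edge _ _) fun u v => ⟨fun h p => ?_, fun h => ?_⟩⟩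
  · obtain ⟨⟨x, y⟩, hxy⟩ := p
    simp only [sdiff_adj, top_adj, edge_adj, ne_eq, h.ne, not_false_eq_true, true_and,
      and_true]
    rintro (⟨rfl, rfl⟩ | ⟨rfl, rfl⟩)
    exacts [hxy h, hxy h.symm]
  · by_contra huv
    simpa [edge_adj] using h ⟨(u, v), huv⟩

lemma cubicity_mem_intersectionDims [Finite V] (G : SimpleGraph V) :
    cubicity G ∈ intersectionDims IsIndifferenceGraph G :=
  Nat.sInf_mem (intersectionDims_isIndifferenceGraph_nonempty G)

lemma boxicity_mem_intersectionDims [Finite V] (G : SimpleGraph V) :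
    boxicity G ∈ intersectionDims IsIntervalGraph G :=
  Nat.sInf_mem ⟨_, intersectionDims_mono (fun _ => IsIndifferenceGraph.isIntervalGraph)
    (cubicity_mem_intersectionDims G)⟩

lemma boxicity_le_cubicity [Finite V] (G : SimpleGraph V) : boxicity G ≤ cubicity G :=
  Nat.sInf_le (intersectionDims_mono (fun _ => IsIndifferenceGraph.isIntervalGraph)
    (cubicity_mem_intersectionDims G))

lemma one_le_boxicity [Finite V] [Nonempty V] (G : SimpleGraph V) : 1 ≤ boxicity G :=
  Nat.one_le_iff_ne_zero.2 fun h =>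
    zero_notMem_intersectionDims (h ▸ boxicity_mem_intersectionDims G)

lemma boxicity_le_one (h : IsIntervalGraph G) : boxicity G ≤ 1 :=
  Nat.sInf_le (one_mem_intersectionDims h)

lemma cubicity_le_one (h : IsIndifferenceGraph G) : cubicity G ≤ 1 :=
  Nat.sInf_le (one_mem_intersectionDims h)

lemma cubicity_le_mul [Finite V] {b C : ℕ} (I : Fin b → SimpleGraph V)
    (hG : ∀ u v, G.Adj u v ↔ ∀ i, (I i).Adj u v) (hC : ∀ i, cubicity (I i) ≤ C) :
    cubicity G ≤ b * C :=
  Nat.sInf_le <| mul_mem_intersectionDims I hG fun i =>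
    mem_intersectionDims_of_le isIndifferenceGraph_top (cubicity_mem_intersectionDims _) (hC i)

lemma cubicity_le_of_isIntervalGraph {r : ℝ} (hr : 1 ≤ r)
    (hmax : ∀ G : SimpleGraph V, (¬ ∀ u v : V, u ≠ v → G.Adj u v) →
      (cubicity G : ℝ) ≤ r * (boxicity G : ℝ))
    {H : SimpleGraph V} (hH : IsIntervalGraph H) : (cubicity H : ℝ) ≤ r := by
  by_cases hcomplete : ∀ u v : V, u ≠ v → H.Adj u v
  · have hH : H = ⊤ := by ext u v; exact ⟨Adj.ne, hcomplete u v⟩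
    have : cubicity H ≤ 1 := cubicity_le_one (hH ▸ isIndifferenceGraph_top)
    exact le_trans (by exact_mod_cast this) hr
  · have : (boxicity H : ℝ) ≤ 1 := by exact_mod_cast boxicity_le_one hH
    nlinarith [hmax H hcomplete]

end Graphs

/-- if r is the largest real with cub(G) = r·box(G) for some
non-complete graph G on n vertices, then some interval graph G' on n vertices
has cub(G') = r. -/
theorem stmt5 (n : ℕ) (r : ℝ)
    (hmax : ∀ G : SimpleGraph (Fin n), (¬ ∀ u v : Fin n, u ≠ v → G.Adj u v) →
      (cubicity G : ℝ) ≤ r * (boxicity G : ℝ))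
    (hatt : ∃ G : SimpleGraph (Fin n), (¬ ∀ u v : Fin n, u ≠ v → G.Adj u v) ∧
      (cubicity G : ℝ) = r * (boxicity G : ℝ)) :
    ∃ G' : SimpleGraph (Fin n), IsIntervalGraph G' ∧ (cubicity G' : ℝ) = r := by
  obtain ⟨G, hGnc, hGr⟩ := hatt
  have : Nonempty (Fin n) := ⟨(not_forall.1 hGnc).choose⟩
  have hbox : (1 : ℝ) ≤ boxicity G := by exact_mod_cast one_le_boxicity G
  have hboxcub : (boxicity G : ℝ) ≤ cubicity G := by exact_mod_cast boxicity_le_cubicity G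
  have hr : 1 ≤ r := by nlinarith
  obtain ⟨I, hI, hGI⟩ := boxicity_mem_intersectionDims G
  have : Nonempty (Fin (boxicity G)) := ⟨⟨0, one_le_boxicity G⟩⟩
  obtain ⟨i, hi⟩ := Finite.exists_max fun i => cubicity (I i)
  have hcub : (cubicity G : ℝ) ≤ boxicity G * cubicity (I i) := by
    exact_mod_cast cubicity_le_mul I hGI hi
  refine ⟨I i, hI i, le_antisymm (cubicity_le_of_isIntervalGraph hr hmax (hI i)) ?_⟩
  nlinarith
end

section
/- Let G be an interval graph on vertex set V of size n = 2^k with ordering f as in the ordering lemma. Fix 1 ≤ i ≤ k, let A_i = {v : ⌈f(v)/2^{i-1}⌉ is odd} and B_i = {v : ⌈f(v)/2^{i-1}⌉ is even}, and define intervals Π_i(v) = [n+f(v), 2n+f(v)] for v ∈ B_i; Π_i(v) = [0, n] for v ∈ A_i with no neighbor in B_i; and Π_i(v) = [t, n+t] with t = max{f(x) : x ∈ N(v) ∩ B_i} otherwise. Then the intersection graph I_i of these unit-length (length n) intervals satisfies E(I_i) ⊇ E(G). -/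
/-- The rank of a vertex under an ordering f : V ≃ Fin n, as an element of {1,…,n}. -/
def rk {V : Type*} {n : ℕ} (f : V ≃ Fin n) (v : V) : ℕ := (f v : ℕ) + 1

/-- B_i : the vertices whose rank lies in an even-indexed block of the i-th dyadic
partition, i.e. ⌈rk(v)/2^(i-1)⌉ is even. -/
def Bblk {V : Type*} [Fintype V] [DecidableEq V] {n : ℕ} (f : V ≃ Fin n) (i : ℕ) :
    Finset V :=
  Finset.univ.filter (fun v => ((rk f v + 2 ^ (i - 1) - 1) / 2 ^ (i - 1)) % 2 = 0)

/-- t = max{f(x) : x ∈ N(v) ∩ B_i}. -/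
def tmax {V : Type*} [Fintype V] [DecidableEq V] {n : ℕ} (G : SimpleGraph V)
    [DecidableRel G.Adj] (f : V ≃ Fin n) (i : ℕ) (v : V) : ℕ :=
  (G.neighborFinset v ∩ Bblk f i).sup (rk f)

/-- The interval Π_i(v) of the construction. -/
noncomputable def PiInt {V : Type*} [Fintype V] [DecidableEq V] {n : ℕ}
    (G : SimpleGraph V) [DecidableRel G.Adj] (f : V ≃ Fin n) (i : ℕ) (v : V) :
    Set ℝ :=
  if v ∈ Bblk f i then Set.Icc ((n : ℝ) + rk f v) (2 * n + rk f v)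
  else if (G.neighborFinset v ∩ Bblk f i).Nonempty then
    Set.Icc ((tmax G f i v : ℝ)) ((n : ℝ) + tmax G f i v)
  else Set.Icc (0 : ℝ) (n : ℝ)

/-- The intersection graph I_i of the intervals Π_i. -/
noncomputable def Igraph {V : Type*} [Fintype V] [DecidableEq V] {n : ℕ}
    (G : SimpleGraph V) [DecidableRel G.Adj] (f : V ≃ Fin n) (i : ℕ) :
    SimpleGraph V where
  Adj u v := u ≠ v ∧ (PiInt G f i u ∩ PiInt G f i v).Nonempty
  symm := by
    constructor
    intro u v h
    exact ⟨h.1.symm, by rw [Set.inter_comm]; exact h.2⟩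
  loopless := by
    constructor
    intro u h
    exact h.1 rfl

/-!
Every interval `Π_i(v)` with `v ∈ A_i` contains `n`, and every one with `v ∈ B_i` contains `2n`,
so only edges between `A_i` and `B_i` need an argument. For such an edge `uv` with `u ∈ B_i`,
`u` is one of the neighbours over which `t = t(v)` is the maximum, so `t ≤ n` and `f(u) ≤ t` put
the left end `n + f(u)` of `Π_i(u)` inside `Π_i(v) = [t, n + t]`.
-/

section IntervalConstruction

lemma rk_le {V : Type*} {n : ℕ} (f : V ≃ Fin n) (v : V) : rk f v ≤ n := (f v).isLt

variable {V : Type*} [Fintype V] [DecidableEq V] {n : ℕ}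
  (G : SimpleGraph V) [DecidableRel G.Adj] (f : V ≃ Fin n) (i : ℕ)

lemma tmax_le (v : V) : tmax G f i v ≤ n :=
  Finset.sup_le fun x _ => rk_le f x

lemma rk_le_tmax {u v : V} (huv : G.Adj v u) (hu : u ∈ Bblk f i) : rk f u ≤ tmax G f i v :=
  Finset.le_sup (Finset.mem_inter.mpr ⟨(G.mem_neighborFinset v u).mpr huv, hu⟩)

lemma two_mul_mem_piInt {v : V} (hv : v ∈ Bblk f i) : 2 * (n : ℝ) ∈ PiInt G f i v := by
  have hrk : (rk f v : ℝ) ≤ n := by exact_mod_cast rk_le f v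
  rw [PiInt, if_pos hv]
  constructor <;> linarith [(rk f v).cast_nonneg (α := ℝ)]

lemma natCast_mem_piInt {v : V} (hv : v ∉ Bblk f i) : (n : ℝ) ∈ PiInt G f i v := by
  have ht : (tmax G f i v : ℝ) ≤ n := by exact_mod_cast tmax_le G f i v
  rw [PiInt, if_neg hv]
  split_ifs
  · constructor <;> linarith [(tmax G f i v).cast_nonneg (α := ℝ)]
  · exact Set.right_mem_Icc.mpr n.cast_nonneg

lemma add_rk_mem_piInt_of_adj {u v : V} (huv : G.Adj u v) (hu : u ∈ Bblk f i)
    (hv : v ∉ Bblk f i) : (n : ℝ) + rk f u ∈ PiInt G f i v := by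
  have hut : (rk f u : ℝ) ≤ tmax G f i v := by exact_mod_cast rk_le_tmax G f i huv.symm hu
  have ht : (tmax G f i v : ℝ) ≤ n := by exact_mod_cast tmax_le G f i v
  have hne : (G.neighborFinset v ∩ Bblk f i).Nonempty :=
    ⟨u, Finset.mem_inter.mpr ⟨(G.mem_neighborFinset v u).mpr huv.symm, hu⟩⟩
  rw [PiInt, if_neg hv, if_pos hne]
  constructor <;> linarith [(rk f u).cast_nonneg (α := ℝ)]

lemma add_rk_mem_piInt {u : V} (hu : u ∈ Bblk f i) : (n : ℝ) + rk f u ∈ PiInt G f i u := by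
  rw [PiInt, if_pos hu]
  exact Set.left_mem_Icc.mpr (by linarith [(n.cast_nonneg : (0 : ℝ) ≤ n)])

lemma igraph_adj_of_adj_of_mem_bblk {u v : V} (huv : G.Adj u v) (hu : u ∈ Bblk f i) :
    (Igraph G f i).Adj u v := by
  by_cases hv : v ∈ Bblk f i
  · exact ⟨huv.ne, _, two_mul_mem_piInt G f i hu, two_mul_mem_piInt G f i hv⟩
  · exact ⟨huv.ne, _, add_rk_mem_piInt G f i hu, add_rk_mem_piInt_of_adj G f i huv hu hv⟩

end IntervalConstruction

theorem stmt8_general {V : Type*} [Fintype V] [DecidableEq V] (k : ℕ)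
    (G : SimpleGraph V) [DecidableRel G.Adj]
    (f : V ≃ Fin (2 ^ k))
    (i : ℕ) :
    ∀ u v : V, G.Adj u v → (Igraph G f i).Adj u v := by
  intro u v huv
  by_cases hu : u ∈ Bblk f i
  · exact igraph_adj_of_adj_of_mem_bblk G f i huv hu
  by_cases hv : v ∈ Bblk f i
  · exact (igraph_adj_of_adj_of_mem_bblk G f i huv.symm hv).symm
  · exact ⟨huv.ne, _, natCast_mem_piInt G f i hu, natCast_mem_piInt G f i hv⟩

/-- E(I_i) ⊇ E(G). -/
theorem stmt8 {V : Type*} [Fintype V] [DecidableEq V] (k : ℕ)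
    (G : SimpleGraph V) [DecidableRel G.Adj]
    (f : V ≃ Fin (2 ^ k))
    (hf : ∀ u v w : V, (f u : ℕ) < (f w : ℕ) → (f w : ℕ) < (f v : ℕ) →
      G.Adj u v → G.Adj u w)
    (i : ℕ) (hi1 : 1 ≤ i) (hik : i ≤ k) :
    ∀ u v : V, G.Adj u v → (Igraph G f i).Adj u v :=
  stmt8_general k G f i
end

section
/- The bound cub(G) ≤ ⌈log₂ n⌉ · box(G) is tight: for every n with n ≠ 2^k + 1 for all k, the star graph S(n) on n vertices satisfies box(S(n)) = 1 and cub(S(n)) = ⌈log₂ n⌉. -/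
/-- The star S(n) = K_{1,n-1} on vertex set Fin n: vertex 0 is the center,
adjacent to all other vertices, and there are no other edges. -/
def starGraph (n : ℕ) : SimpleGraph (Fin n) where
  Adj u v := u ≠ v ∧ ((u : ℕ) = 0 ∨ (v : ℕ) = 0)
  symm := by
    constructor
    intro u v h
    exact ⟨h.1.symm, h.2.symm⟩
  loopless := by
    constructor
    intro u h
    exact h.1 rfl

/-!
The star is an interval graph: the centre is a long interval containing the points that represent
the leaves. For cubicity, place the centre at `(1, …, 1)` and leaf `v` at twice the binary code of
`v - 1`; two leaves then differ by `2` in some coordinate, so `⌈log₂ (n - 1)⌉` unit cubes suffice.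
Conversely, in a representation by unit cubes in `ℝ^b`, recording on which side of the centre each
leaf lies in every coordinate is injective on leaves, because two leaves on the same side
everywhere would be at sup-distance at most `1`; hence `n - 1 ≤ 2 ^ b`. Finally `⌈log₂ (n - 1)⌉`
and `⌈log₂ n⌉` differ only when `n - 1` is a power of two.
-/

theorem Nat.clog_two_sub_one_eq {n : ℕ} (hn : ∀ k : ℕ, n ≠ 2 ^ k + 1) :
    Nat.clog 2 (n - 1) = Nat.clog 2 n := by
  refine le_antisymm (Nat.clog_mono_right 2 (Nat.sub_le n 1)) ?_
  rw [Nat.clog_le_iff_le_pow one_lt_two]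
  have := Nat.le_pow_clog one_lt_two (n - 1)
  have := hn (Nat.clog 2 (n - 1))
  omega

theorem Nat.exists_lt_testBit_ne {x y d : ℕ} (hx : x < 2 ^ d) (hy : y < 2 ^ d) (hxy : x ≠ y) :
    ∃ i < d, x.testBit i ≠ y.testBit i := by
  obtain ⟨i, hi⟩ := Nat.exists_testBit_ne_of_ne hxy
  refine ⟨i, lt_of_not_ge fun hdi => hi ?_, hi⟩
  have h2 : 2 ^ d ≤ 2 ^ i := Nat.pow_le_pow_right two_pos hdi
  rw [Nat.testBit_lt_two_pow (hx.trans_le h2), Nat.testBit_lt_two_pow (hy.trans_le h2)]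

theorem Set.Icc_inter_Icc_add_one_nonempty_iff (a c : ℝ) :
    (Set.Icc a (a + 1) ∩ Set.Icc c (c + 1)).Nonempty ↔ |a - c| ≤ 1 := by
  rw [Set.Icc_inter_Icc, Set.nonempty_Icc, abs_sub_le_iff]
  constructor
  · intro h
    constructor <;> linarith [le_max_left a c, le_max_right a c,
      min_le_left (a + 1) (c + 1), min_le_right (a + 1) (c + 1)]
  · rintro ⟨h1, h2⟩
    exact max_le (le_min (by linarith) (by linarith)) (le_min (by linarith) (by linarith))

theorem abs_sub_le_one_of_lt_iff_lt {x y c : ℝ} (hx : |x - c| ≤ 1) (hy : |y - c| ≤ 1)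
    (h : x < c ↔ y < c) : |x - y| ≤ 1 := by
  rw [abs_sub_le_iff] at *
  by_cases hxc : x < c
  · have := h.1 hxc
    constructor <;> linarith
  · have := mt h.2 hxc
    constructor <;> linarith

section Boxicity

variable {V : Type*} {G : SimpleGraph V}

theorem boxicity_eq_one_of_isIntervalGraph [Nonempty V] (hG : IsIntervalGraph G) :
    boxicity G = 1 := by
  have hone : 1 ∈ {b : ℕ | ∃ I : Fin b → SimpleGraph V,
      (∀ i, IsIntervalGraph (I i)) ∧ ∀ u v : V, G.Adj u v ↔ ∀ i, (I i).Adj u v} :=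
    ⟨fun _ => G, fun _ => hG, fun _ _ => ⟨fun h _ => h, fun h => h 0⟩⟩
  refine le_antisymm (Nat.sInf_le hone) (Nat.one_le_iff_ne_zero.mpr fun h0 => ?_)
  obtain ⟨I, -, hI⟩ | hempty := Nat.sInf_eq_zero.mp h0
  · obtain ⟨v⟩ := ‹Nonempty V›
    exact G.loopless.irrefl v ((hI v v).mpr finZeroElim)
  · exact hempty.subset hone

end Boxicity

section Cubicity

variable {V : Type*} {G : SimpleGraph V} {b : ℕ}

/-- `l` embeds `G` in `ℝ^b` so that distinct vertices are adjacent exactly when they are at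
sup-distance at most `1`, i.e. when the unit cubes with corners `l u` and `l v` meet. -/
def IsUnitCubeRep (G : SimpleGraph V) (l : Fin b → V → ℝ) : Prop :=
  ∀ u v, u ≠ v → (G.Adj u v ↔ ∀ i, |l i u - l i v| ≤ 1)

theorem IsUnitCubeRep.of_indifferenceGraphs {I : Fin b → SimpleGraph V}
    (hI : ∀ i, IsIndifferenceGraph (I i)) (hG : ∀ u v, G.Adj u v ↔ ∀ i, (I i).Adj u v) :
    ∃ l : Fin b → V → ℝ, IsUnitCubeRep G l := by
  choose l hl using hI
  refine ⟨l, fun u v huv => (hG u v).trans (forall_congr' fun i => ?_)⟩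
  rw [hl i u v huv, Set.Icc_inter_Icc_add_one_nonempty_iff]

theorem IsUnitCubeRep.exists_indifferenceGraphs (hb : 0 < b) {l : Fin b → V → ℝ}
    (hl : IsUnitCubeRep G l) : ∃ I : Fin b → SimpleGraph V,
      (∀ i, IsIndifferenceGraph (I i)) ∧ ∀ u v, G.Adj u v ↔ ∀ i, (I i).Adj u v := by
  refine ⟨fun i => SimpleGraph.fromRel fun u v => |l i u - l i v| ≤ 1, fun i => ⟨l i, ?_⟩, ?_⟩
  · intro u v huv
    rw [SimpleGraph.fromRel_adj, Set.Icc_inter_Icc_add_one_nonempty_iff, abs_sub_comm (l i v)]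
    simp [huv]
  · intro u v
    by_cases huv : u = v
    · subst huv
      simpa using ⟨⟨0, hb⟩⟩
    · simp only [SimpleGraph.fromRel_adj, abs_sub_comm (l _ v), or_self, hl u v huv]
      exact ⟨fun h i => ⟨huv, h i⟩, fun h i => (h i).2⟩

theorem IsUnitCubeRep.cubicity_le (hb : 0 < b) {l : Fin b → V → ℝ} (hl : IsUnitCubeRep G l) :
    cubicity G ≤ b :=
  Nat.sInf_le (hl.exists_indifferenceGraphs hb)

theorem IsUnitCubeRep.exists_cubicity (hb : 0 < b) {l : Fin b → V → ℝ}
    (hl : IsUnitCubeRep G l) : ∃ l' : Fin (cubicity G) → V → ℝ, IsUnitCubeRep G l' := by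
  have hmem : cubicity G ∈ _ := Nat.sInf_mem ⟨b, hl.exists_indifferenceGraphs hb⟩
  obtain ⟨I, hI, hG⟩ := hmem
  exact IsUnitCubeRep.of_indifferenceGraphs hI hG

theorem IsUnitCubeRep.card_le_two_pow {l : Fin b → V → ℝ} (hl : IsUnitCubeRep G l)
    {ι : Type*} [Fintype ι] {c : V} {f : ι → V} (hf : Function.Injective f)
    (hcf : ∀ j, G.Adj c (f j)) (hff : ∀ j j', ¬ G.Adj (f j) (f j')) :
    Fintype.card ι ≤ 2 ^ b := by
  have hnear : ∀ j i, |l i (f j) - l i c| ≤ 1 := fun j i => by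
    rw [abs_sub_comm]
    exact (hl c (f j) (hcf j).ne).mp (hcf j) i
  have hside : Function.Injective fun j (i : Fin b) => decide (l i (f j) < l i c) := by
    intro j j' hjj'
    by_contra hne
    refine hff j j' ((hl _ _ (hf.ne hne)).mpr fun i => ?_)
    exact abs_sub_le_one_of_lt_iff_lt (hnear j i) (hnear j' i)
      (by simpa using congrFun hjj' i)
  simpa using Fintype.card_le_of_injective _ hside

end Cubicity

theorem starGraph_isIntervalGraph (n : ℕ) : IsIntervalGraph (starGraph n) := by
  refine ⟨fun v => if (v : ℕ) = 0 then 0 else (v : ℕ), fun v => if (v : ℕ) = 0 then n else (v : ℕ),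
    fun u v huv => ?_⟩
  have hval : (u : ℕ) ≠ v := Fin.val_ne_of_ne huv
  have hu := u.isLt
  have hv := v.isLt
  simp only [starGraph, ne_eq, huv, not_false_eq_true, true_and]
  by_cases hu0 : (u : ℕ) = 0 <;> by_cases hv0 : (v : ℕ) = 0 <;>
    simp only [hu0, hv0, if_true, if_false, Set.Icc_self]
  · omega
  · simp only [Set.inter_singleton_nonempty, Set.mem_Icc, true_or, true_iff]
    exact ⟨by positivity, by exact_mod_cast hv.le⟩
  · simp only [Set.singleton_inter_nonempty, Set.mem_Icc, or_true, true_iff]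
    exact ⟨by positivity, by exact_mod_cast hu.le⟩
  · simpa [Set.singleton_inter_nonempty, eq_comm] using hval

theorem exists_isUnitCubeRep_starGraph {n d : ℕ} (hd : n - 1 ≤ 2 ^ d) :
    ∃ l : Fin d → Fin n → ℝ, IsUnitCubeRep (starGraph n) l := by
  refine ⟨fun i v => if (v : ℕ) = 0 then 1 else if (v - 1 : ℕ).testBit i then 2 else 0,
    fun u v huv => ?_⟩
  simp only [starGraph, ne_eq, huv, not_false_eq_true, true_and]
  by_cases hu0 : (u : ℕ) = 0 <;> by_cases hv0 : (v : ℕ) = 0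
  · exact absurd (Fin.ext (hu0.trans hv0.symm)) huv
  · simp only [hu0, hv0, true_or, true_iff, if_true, if_false]
    intro i
    split_ifs <;> norm_num
  · simp only [hu0, hv0, or_true, true_iff, if_true, if_false]
    intro i
    split_ifs <;> norm_num
  · simp only [hu0, hv0, or_self, false_iff, if_false, not_forall]
    obtain ⟨i, hi, hbit⟩ := Nat.exists_lt_testBit_ne (x := u - 1) (y := v - 1) (d := d)
      (by omega) (by omega) (by have := Fin.val_ne_of_ne huv; omega)
    refine ⟨⟨i, hi⟩, ?_⟩
    cases hub : (u - 1 : ℕ).testBit i <;> cases hvb : (v - 1 : ℕ).testBit i <;>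
      simp_all

theorem cubicity_starGraph {n : ℕ} (hn : 3 ≤ n) :
    cubicity (starGraph n) = Nat.clog 2 (n - 1) := by
  obtain ⟨l, hl⟩ := exists_isUnitCubeRep_starGraph (d := Nat.clog 2 (n - 1))
    (Nat.le_pow_clog one_lt_two _)
  have hpos : 0 < Nat.clog 2 (n - 1) := Nat.clog_pos one_lt_two (by omega)
  refine le_antisymm (hl.cubicity_le hpos) ((Nat.clog_le_iff_le_pow one_lt_two).mpr ?_)
  obtain ⟨l', hl'⟩ := hl.exists_cubicity hpos
  obtain ⟨m, rfl⟩ : ∃ m, n = m + 1 := ⟨n - 1, by omega⟩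
  simpa using hl'.card_le_two_pow (c := 0) (Fin.succ_injective m)
    (fun j => ⟨(Fin.succ_ne_zero j).symm, Or.inl rfl⟩) (fun j j' h => by simpa using h.2)

/-- tightness — if n ≥ 3 is not of the form 2^k + 1, then
box(S(n)) = 1 and cub(S(n)) = ⌈log₂ n⌉. -/
theorem stmt14 (n : ℕ) (hn : 3 ≤ n) (h2 : ∀ k : ℕ, n ≠ 2 ^ k + 1) :
    boxicity (starGraph n) = 1 ∧ cubicity (starGraph n) = Nat.clog 2 n := by
  have : Nonempty (Fin n) := ⟨⟨0, by omega⟩⟩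
  exact ⟨boxicity_eq_one_of_isIntervalGraph (starGraph_isIntervalGraph n),
    (cubicity_starGraph hn).trans (Nat.clog_two_sub_one_eq h2)⟩
end
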